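/- arXiv:1910.00494 — 3 statements merged into one kernel-verified Lean document; each statement's English description precedes it below -/
import Mathlib

section
/- Sampling a shortest path p_{uw} with probability 1/(n(n-1)σ_{uw}), the expected value of f_v(p_{uw}) equals the percolation centrality p(v), i.e. E[f_v] = p(v) for every vertex v. -/
open Finset

theorem sum_one_div_mul_card_mul_ite {P K : Type*} [Field K] (s : Finset P) (q : P → Prop)
    [DecidablePred q] (c r : K) :
    ∑ p ∈ s, 1 / (c * s.card) * (r * if q p then 1 else 0)
      = 1 / c * ((s.filter q).card / s.card * r) := by
  rw [← mul_sum, ← mul_sum, sum_boole]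
  simp only [div_eq_mul_inv, mul_inv]
  ring

theorem sum_sum_filter_ne_eq_sum_sum {α M : Type*} [Fintype α] [DecidableEq α]
    [AddCommMonoid M] (g : α → α → M) (v : α) (hg : ∀ u w, u = v ∨ w = v → g u w = 0) :
    ∑ u ∈ univ.filter (fun u => u ≠ v), ∑ w ∈ univ.filter (fun w => w ≠ v), g u w
      = ∑ u, ∑ w, g u w :=
  calc _ = ∑ u ∈ univ.filter (fun u => u ≠ v), ∑ w, g u w :=
        sum_congr rfl fun u _ =>
          sum_filter_of_ne (p := fun w => w ≠ v) fun w _ h hw => h (hg u w (Or.inr hw))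
    _ = ∑ u, ∑ w, g u w :=
        sum_filter_of_ne (p := fun u => u ≠ v) fun u _ h hu =>
          h (sum_eq_zero fun w _ => hg u w (Or.inl hu))

/-- `S u w` is the set of shortest paths from `u` to `w`, and `Int p` the set of internal
vertices of the path `p`. -/
theorem expectation_eq_percolation_centrality_general {V P : Type*} [Fintype V] [DecidableEq V]
    (S : V → V → Finset P) (x : V → ℝ) (Int : P → Finset V) (v : V)
    (hint : ∀ u w : V, ∀ p ∈ S u w, v ∈ Int p → u ≠ v ∧ w ≠ v) :
    ∑ u : V, ∑ w : V, ∑ p ∈ S u w,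
      ((1 : ℝ) / ((Fintype.card V : ℝ) * ((Fintype.card V : ℝ) - 1) * ((S u w).card : ℝ))) *
        ((max (x u - x w) 0 /
            (∑ f ∈ univ.filter (fun f => f ≠ v), ∑ d ∈ univ.filter (fun d => d ≠ v),
              max (x f - x d) 0)) *
          (if v ∈ Int p then 1 else 0))
    = (1 : ℝ) / ((Fintype.card V : ℝ) * ((Fintype.card V : ℝ) - 1)) *
        ∑ u ∈ univ.filter (fun u => u ≠ v), ∑ w ∈ univ.filter (fun w => w ≠ v),
          (((S u w).filter (fun p => v ∈ Int p)).card : ℝ) / ((S u w).card : ℝ) *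
            (max (x u - x w) 0 /
              (∑ f ∈ univ.filter (fun f => f ≠ v), ∑ d ∈ univ.filter (fun d => d ≠ v),
                max (x f - x d) 0)) := by
  have no_path_through_endpoint : ∀ u w, u = v ∨ w = v →
      (S u w).filter (fun p => v ∈ Int p) = ∅ := fun u w hend =>
    filter_eq_empty_iff.2 fun p hp hv => hend.elim (hint u w p hp hv).1 (hint u w p hp hv).2
  simp_rw [sum_one_div_mul_card_mul_ite, ← mul_sum]
  -- Only the outer double sum may be extended to all pairs: the normalising double sum in the
  -- denominator has the same shape, but its terms need not vanish at `v`.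
  congr 1
  refine (sum_sum_filter_ne_eq_sum_sum _ v fun u w hend => ?_).symm
  simp [no_path_through_endpoint u w hend]

/-- Sampling a shortest path `p ∈ S u w` with probability `1/(n(n-1)σ_{uw})`, the
expectation of `f_v` equals the percolation centrality `p(v)`. Here `Int p` is the
set of internal vertices of the path `p`. -/
theorem expectation_eq_percolation_centrality {V P : Type*} [Fintype V] [DecidableEq V]
    (S : V → V → Finset P) (x : V → ℝ) (Int : P → Finset V) (v : V)
    (hx : ∀ u, x u ∈ Set.Icc (0 : ℝ) 1)
    (hdiag : ∀ u, S u u = ∅)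
    (hne : ∀ u w : V, u ≠ w → (S u w).Nonempty)
    (hint : ∀ u w : V, ∀ p ∈ S u w, v ∈ Int p → u ≠ v ∧ w ≠ v) :
    ∑ u : V, ∑ w : V, ∑ p ∈ S u w,
      ((1 : ℝ) / ((Fintype.card V : ℝ) * ((Fintype.card V : ℝ) - 1) * ((S u w).card : ℝ))) *
        ((max (x u - x w) 0 /
            (∑ f ∈ univ.filter (fun f => f ≠ v), ∑ d ∈ univ.filter (fun d => d ≠ v),
              max (x f - x d) 0)) *
          (if v ∈ Int p then 1 else 0))
    = (1 : ℝ) / ((Fintype.card V : ℝ) * ((Fintype.card V : ℝ) - 1)) *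
        ∑ u ∈ univ.filter (fun u => u ≠ v), ∑ w ∈ univ.filter (fun w => w ≠ v),
          (((S u w).filter (fun p => v ∈ Int p)).card : ℝ) / ((S u w).card : ℝ) *
            (max (x u - x w) 0 /
              (∑ f ∈ univ.filter (fun f => f ≠ v), ∑ d ∈ univ.filter (fun d => d ≠ v),
                max (x f - x d) 0)) :=
  expectation_eq_percolation_centrality_general S x Int v hint
end

section
/- Suppose each point of a finite set B ⊆ D belongs to at most M of the ranges in a family R of subsets of D, with M ≥ 1. If B is shattered by R, then |B| ≤ ⌊log₂ M⌋ + 1. -/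
/-!
Fix `b ∈ B`. Shattering provides, for every `s ⊆ B \ {b}`, a range `r` with `B ∩ r = s ∪ {b}`;
these `2 ^ (|B| - 1)` ranges are pairwise distinct and all contain `b`, so `2 ^ (|B| - 1) ≤ M`.
-/

open Finset

lemma two_pow_card_sub_one_le_encard_ranges_mem {D : Type*} {R : Set (Set D)} {B : Finset D}
    {b : D} (hshat : ∀ s ⊆ (B : Set D), ∃ r ∈ R, (B : Set D) ∩ r = s) (hb : b ∈ B) :
    (2 ^ (#B - 1) : ℕ∞) ≤ {r ∈ R | b ∈ r}.encard := by
  classical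
  choose! f hfR hf using hshat
  have htrace : ∀ s ∈ (B.erase b).powerset, (B : Set D) ∩ f ↑(insert b s) = ↑(insert b s) :=
    fun s hs ↦ hf _ <| coe_subset.2 <|
      insert_subset hb ((mem_powerset.1 hs).trans (erase_subset b B))
  have hmaps : Set.MapsTo (fun s : Finset D ↦ f ↑(insert b s))
      ((B.erase b).powerset : Set (Finset D)) {r ∈ R | b ∈ r} := by
    intro s hs
    refine ⟨hfR _ ?_, ?_⟩
    · simpa using (htrace s hs).symm.trans_subset Set.inter_subset_left
    · exact ((htrace s hs).symm.subset (mem_insert_self b s)).2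
  have hinj : Set.InjOn (fun s : Finset D ↦ f ↑(insert b s))
      ((B.erase b).powerset : Set (Finset D)) := by
    intro s hs t ht hst
    have hins : insert b s = insert b t := by
      exact_mod_cast (htrace s hs).symm.trans ((congrArg _ hst).trans (htrace t ht))
    have hbs : b ∉ s := fun h ↦ (mem_erase.1 (mem_powerset.1 hs h)).1 rfl
    have hbt : b ∉ t := fun h ↦ (mem_erase.1 (mem_powerset.1 ht h)).1 rfl
    rw [← erase_insert hbs, ← erase_insert hbt, hins]
  calc (2 ^ (#B - 1) : ℕ∞) = ((B.erase b).powerset : Set (Finset D)).encard := by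
        rw [Set.encard_coe_eq_coe_finsetCard, card_powerset, card_erase_of_mem hb]; norm_cast
    _ ≤ {r ∈ R | b ∈ r}.encard := Set.encard_le_encard_of_injOn hmaps hinj

theorem shattered_card_le_log_general {D : Type*} (R : Set (Set D)) (B : Finset D)
    (M : ℕ)
    (hfin : ∀ b ∈ B, {r ∈ R | b ∈ r}.Finite)
    (hcount : ∀ b ∈ B, {r ∈ R | b ∈ r}.ncard ≤ M)
    (hshat : ∀ s ⊆ (B : Set D), ∃ r ∈ R, (B : Set D) ∩ r = s) :
    B.card ≤ Nat.log 2 M + 1 := by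
  rcases B.eq_empty_or_nonempty with rfl | ⟨b, hb⟩
  · simp
  have hpow : 2 ^ (#B - 1) ≤ M := by
    have h := two_pow_card_sub_one_le_encard_ranges_mem hshat hb
    rw [← (hfin b hb).cast_ncard_eq] at h
    exact (mod_cast h : 2 ^ (#B - 1) ≤ _).trans (hcount b hb)
  have := Nat.le_log_of_pow_le one_lt_two hpow
  omega

/-- Counting argument: if every point of a finite set `B` lies in at most `M ≥ 1`
ranges of a family `R`, and `B` is shattered by `R`, then `|B| ≤ ⌊log₂ M⌋ + 1`. -/
theorem shattered_card_le_log {D : Type*} (R : Set (Set D)) (B : Finset D)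
    (M : ℕ) (hM : 1 ≤ M)
    (hfin : ∀ b ∈ B, {r ∈ R | b ∈ r}.Finite)
    (hcount : ∀ b ∈ B, {r ∈ R | b ∈ r}.ncard ≤ M)
    (hshat : ∀ s ⊆ (B : Set D), ∃ r ∈ R, (B : Set D) ∩ r = s) :
    B.card ≤ Nat.log 2 M + 1 :=
  shattered_card_le_log_general R B M hfin hcount hshat
end

section
/- Let G be a graph with vertex-diameter D = diam(G) ≥ 3 (maximum number of vertices on a shortest path). Then the pseudo-dimension of the range space (U, F) of percolation functions f_v over shortest paths satisfies PD ≤ ⌊lg(D − 2)⌋ + 1. -/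
/-!
Fix a point `b = (p, t)` of a shattered set `B`. Since the empty trace is realised and every
`f_v` is nonnegative, `t > 0`; hence `b` lies below the graph of `f_v` only when `f_v(p) ≠ 0`,
i.e. only for the at most `D - 2` vertices `v` internal to `p`. Yet each of the `2 ^ (|B| - 1)`
subsets of `B` containing `b` is the trace of such a range, and distinct traces need distinct `v`.
-/

open Finset

section

variable {ι α : Type*}

theorem two_pow_card_sub_one_le_card_of_shatters {R : ι → Set α} {B : Finset α} {b : α}
    {I : Finset ι} (hB : ∀ s ⊆ (B : Set α), ∃ i, (B : Set α) ∩ R i = s) (hb : b ∈ B)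
    (hI : ∀ i, b ∈ R i → i ∈ I) :
    2 ^ (#B - 1) ≤ #I := by
  classical
  set 𝒜 := I.image fun i => (B.erase b).filter (· ∈ R i)
  have h𝒜 : 𝒜.Shatters (B.erase b) := by
    intro t ht
    have hbt : b ∉ t := fun h => B.notMem_erase b (ht h)
    obtain ⟨i, hi⟩ := hB (insert b ↑t) (by
      rw [Set.insert_subset_iff]
      exact ⟨hb, fun a ha => mem_of_mem_erase (ht ha)⟩)
    have hbi : b ∈ R i := ((Set.ext_iff.1 hi b).2 (Set.mem_insert b _)).2
    refine ⟨_, mem_image_of_mem _ (hI i hbi), ?_⟩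
    rw [inter_eq_right.2 (filter_subset _ _)]
    ext a
    have hia := Set.ext_iff.1 hi a
    simp only [Set.mem_inter_iff, mem_coe, Set.mem_insert_iff] at hia
    simp only [mem_filter, mem_erase]
    constructor
    · rintro ⟨⟨hab, haB⟩, haR⟩
      exact (hia.1 ⟨haB, haR⟩).resolve_left hab
    · intro hat
      exact ⟨⟨ne_of_mem_of_not_mem hat hbt, mem_of_mem_erase (ht hat)⟩, (hia.2 (Or.inr hat)).2⟩
  calc 2 ^ (#B - 1) = #(B.erase b).powerset := by rw [card_powerset, card_erase_of_mem hb]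
    _ = #(𝒜.image ((B.erase b) ∩ ·)) := by rw [shatters_iff.1 h𝒜]
    _ ≤ #𝒜 := card_image_le
    _ ≤ #I := card_image_le

theorem card_le_log_of_shatters_subgraphs {f : ι → α → ℝ} {I : α → Finset ι} {m : ℕ}
    {B : Finset (α × ℝ)} (hf_nonneg : ∀ i a, 0 ≤ f i a) (hf_supp : ∀ i a, f i a ≠ 0 → i ∈ I a)
    (hI : ∀ a, #(I a) ≤ m)
    (hB : ∀ s ⊆ (B : Set (α × ℝ)), ∃ i, (B : Set (α × ℝ)) ∩ {q | q.2 ≤ f i q.1} = s) :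
    #B ≤ Nat.log 2 m + 1 := by
  rcases B.eq_empty_or_nonempty with rfl | ⟨b, hb⟩
  · simp
  have hb_pos : 0 < b.2 := by
    obtain ⟨i, hi⟩ := hB ∅ (Set.empty_subset _)
    by_contra! h
    exact Set.eq_empty_iff_forall_notMem.1 hi b ⟨hb, h.trans (hf_nonneg i b.1)⟩
  have hcard : 2 ^ (#B - 1) ≤ m :=
    (two_pow_card_sub_one_le_card_of_shatters hB hb fun i hi =>
      hf_supp i b.1 (hb_pos.trans_le hi).ne').trans (hI b.1)
  have := Nat.le_log_of_pow_le one_lt_two hcard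
  omega

end

theorem percolation_pseudodimension_bound_general {V P : Type*} [Fintype V] [DecidableEq V]
    (x : V → ℝ) (src tgt : P → V) (Int : P → Finset V)
    (D : ℕ)
    (hpath : ∀ p : P, (Int p).card ≤ D - 2)
    (B : Finset (P × ℝ))
    (hshat : ∀ s ⊆ (B : Set (P × ℝ)), ∃ v : V,
      (B : Set (P × ℝ)) ∩ {q : P × ℝ | q.2 ≤
        (max (x (src q.1) - x (tgt q.1)) 0 /
          (∑ a ∈ univ.filter (fun a => a ≠ v),
            ∑ d ∈ univ.filter (fun d => d ≠ v), max (x a - x d) 0)) *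
        (if v ∈ Int q.1 then 1 else 0)} = s) :
    B.card ≤ Nat.log 2 (D - 2) + 1 := by
  refine card_le_log_of_shatters_subgraphs (I := Int) (f := fun v p =>
    (max (x (src p) - x (tgt p)) 0 /
      (∑ a ∈ univ.filter (fun a => a ≠ v),
        ∑ d ∈ univ.filter (fun d => d ≠ v), max (x a - x d) 0)) *
    (if v ∈ Int p then 1 else 0)) ?_ ?_ hpath hshat
  · intro v p
    have : (0 : ℝ) ≤ if v ∈ Int p then 1 else 0 := by split_ifs <;> norm_num
    positivity
  · intro v p h
    by_contra hv
    simp [hv] at h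

/-- Pseudo-dimension bound for the percolation range space: if the vertex-diameter
is `D ≥ 3` (so every shortest path has at most `D − 2` internal vertices), then any
set `B ⊆ U × [0,1]` shattered by the ranges `R_{f_v} = {(p,t) : t ≤ f_v(p)}` of the
percolation functions `f_v` has size at most `⌊log₂ (D−2)⌋ + 1`. -/
theorem percolation_pseudodimension_bound {V P : Type*} [Fintype V] [DecidableEq V]
    (x : V → ℝ) (src tgt : P → V) (Int : P → Finset V)
    (hx : ∀ v, x v ∈ Set.Icc (0 : ℝ) 1)
    (hint : ∀ p : P, ∀ v ∈ Int p, src p ≠ v ∧ tgt p ≠ v)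
    (hden : ∀ v : V, 0 < ∑ a ∈ univ.filter (fun a => a ≠ v),
      ∑ d ∈ univ.filter (fun d => d ≠ v), max (x a - x d) 0)
    (D : ℕ) (hD : 3 ≤ D)
    (hpath : ∀ p : P, (Int p).card ≤ D - 2)
    (B : Finset (P × ℝ))
    (hB : ∀ b ∈ B, b.2 ∈ Set.Icc (0 : ℝ) 1)
    (hshat : ∀ s ⊆ (B : Set (P × ℝ)), ∃ v : V,
      (B : Set (P × ℝ)) ∩ {q : P × ℝ | q.2 ≤
        (max (x (src q.1) - x (tgt q.1)) 0 /
          (∑ a ∈ univ.filter (fun a => a ≠ v),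
            ∑ d ∈ univ.filter (fun d => d ≠ v), max (x a - x d) 0)) *
        (if v ∈ Int q.1 then 1 else 0)} = s) :
    B.card ≤ Nat.log 2 (D - 2) + 1 :=
  percolation_pseudodimension_bound_general x src tgt Int D hpath B hshat
end
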